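/- arXiv:2406.00054 — 3 statements merged into one kernel-verified Lean document; each statement's English description precedes it below -/
import Mathlib

section
/- For every stage τ ∈ {0, …, ℓ} of a finite zs-POSG there exists a constant κ_τ ≥ 0 such that the optimal value function v*_τ is κ_τ-Lipschitz continuous over occupancy states with respect to the 1-norm: |v*_τ(s) − v*_τ(s′)| ≤ κ_τ · ‖s − s′‖₁ for all occupancy states s, s′ ∈ Δ(X × O_τ). -/
open scoped BigOperators

section ZSPOSG

/-- A finitely supported probability distribution on a finite type,
represented as a nonnegative real-valued function summing to one. -/
def IsDist {α : Type} [Fintype α] (f : α → ℝ) : Prop :=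
  (∀ a, 0 ≤ f a) ∧ ∑ a, f a = 1

/-- Stage-`τ` histories of player 1: sequences `(u¹_0, z¹_1, …, u¹_{τ-1}, z¹_τ)`. -/
abbrev Hist1 (U1 Z1 : Type) (τ : ℕ) : Type := Fin τ → U1 × Z1

/-- Stage-`τ` histories of player 2. -/
abbrev Hist2 (U2 Z2 : Type) (τ : ℕ) : Type := Fin τ → U2 × Z2

/-- Stage-`τ` joint histories. -/
abbrev JHist (U1 Z1 U2 Z2 : Type) (τ : ℕ) : Type :=
  Hist1 U1 Z1 τ × Hist2 U2 Z2 τ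

/-- Stage-`τ` stochastic decision rules of player 1. -/
abbrev DR1 (U1 Z1 : Type) [Fintype U1] (τ : ℕ) : Type :=
  {a : Hist1 U1 Z1 τ → U1 → ℝ // ∀ o, IsDist (a o)}

/-- Stage-`τ` stochastic decision rules of player 2. -/
abbrev DR2 (U2 Z2 : Type) [Fintype U2] (τ : ℕ) : Type :=
  {a : Hist2 U2 Z2 τ → U2 → ℝ // ∀ o, IsDist (a o)}

variable {X U1 U2 Z1 Z2 : Type}
variable [Fintype X] [Fintype U1] [Fintype U2] [Fintype Z1] [Fintype Z2]

/-- Expected immediate reward `R(s_τ, a_τ)`. -/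
noncomputable def Rstage (r : X → U1 × U2 → ℝ) (τ : ℕ)
    (s : X × JHist U1 Z1 U2 Z2 τ → ℝ) (a1 : DR1 U1 Z1 τ) (a2 : DR2 U2 Z2 τ) : ℝ :=
  ∑ xo : X × JHist U1 Z1 U2 Z2 τ, s xo *
    ∑ u : U1 × U2, a1.1 xo.2.1 u.1 * a2.1 xo.2.2 u.2 * r xo.1 u

/-- Occupancy-state transition `T(s_τ, a_τ)`:
`T(s,a)(y,(o,u,z)) = a(u|o) ⬝ Σ_x s(x,o) p(y,z|x,u)`. -/
noncomputable def Tstage (p : X → U1 × U2 → X × (Z1 × Z2) → ℝ) (τ : ℕ)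
    (s : X × JHist U1 Z1 U2 Z2 τ → ℝ) (a1 : DR1 U1 Z1 τ) (a2 : DR2 U2 Z2 τ) :
    X × JHist U1 Z1 U2 Z2 (τ + 1) → ℝ := fun yo =>
  let o1 : Hist1 U1 Z1 τ := fun i => yo.2.1 i.castSucc
  let o2 : Hist2 U2 Z2 τ := fun i => yo.2.2 i.castSucc
  let u1 := (yo.2.1 (Fin.last τ)).1
  let z1 := (yo.2.1 (Fin.last τ)).2
  let u2 := (yo.2.2 (Fin.last τ)).1
  let z2 := (yo.2.2 (Fin.last τ)).2
  a1.1 o1 u1 * a2.1 o2 u2 * ∑ x : X, s (x, (o1, o2)) * p x (u1, u2) (yo.1, (z1, z2))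

/-- Optimal value functions defined by backward induction: `vstar p r γ k τ s` is
`v*_τ(s)` when `k = ℓ - τ` stages remain; `vstar … 0 _ ≡ 0` and
`v*_τ(s) = max_{a¹} min_{a²} [R(s,a) + γ v*_{τ+1}(T(s,a))]`. -/
noncomputable def vstar (p : X → U1 × U2 → X × (Z1 × Z2) → ℝ) (r : X → U1 × U2 → ℝ)
    (γ : ℝ) : (k : ℕ) → (τ : ℕ) → (X × JHist U1 Z1 U2 Z2 τ → ℝ) → ℝ
  | 0, _, _ => 0
  | k + 1, τ, s =>
      ⨆ a1 : DR1 U1 Z1 τ, ⨅ a2 : DR2 U2 Z2 τ,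
        Rstage r τ s a1 a2 + γ * vstar p r γ k (τ + 1) (Tstage p τ s a1 a2)

/-- Player-2 marginal occupancy state `s^{m,2}_τ(o²) = Σ_x Σ_{o¹} s(x,(o¹,o²))`. -/
noncomputable def marg2 (τ : ℕ) (s : X × JHist U1 Z1 U2 Z2 τ → ℝ)
    (o2 : Hist2 U2 Z2 τ) : ℝ :=
  ∑ x : X, ∑ o1 : Hist1 U1 Z1 τ, s (x, (o1, o2))

/-- Conditional occupancy state `s^{c,o²}_τ(x,o¹) = s(x,(o¹,o²)) / s^{m,2}_τ(o²)`. -/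
noncomputable def condOcc (τ : ℕ) (s : X × JHist U1 Z1 U2 Z2 τ → ℝ)
    (o2 : Hist2 U2 Z2 τ) : X × Hist1 U1 Z1 τ → ℝ :=
  fun xo1 => s (xo1.1, (xo1.2, o2)) / marg2 τ s o2

/-- Recomposition `c ⊙ m` of a conditional occupancy-state family `c` with a
player-2 marginal `m`: `(c ⊙ m)(x,(o¹,o²)) = c(o²)(x,o¹) ⬝ m(o²)`. -/
noncomputable def odot (τ : ℕ) (c : Hist2 U2 Z2 τ → X × Hist1 U1 Z1 τ → ℝ)
    (m : Hist2 U2 Z2 τ → ℝ) : X × JHist U1 Z1 U2 Z2 τ → ℝ :=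
  fun xo => c xo.2.2 (xo.1, xo.2.1) * m xo.2.2

/-- 1-norm distance between two real-valued functions on a finite type. -/
noncomputable def dist1 {α : Type} [Fintype α] (f g : α → ℝ) : ℝ :=
  ∑ a : α, |f a - g a|

/-- Full trajectories of length `τ`: the states `x_0,…,x_τ` together with the
per-player controls and observations `((u¹_t, z¹_{t+1}), (u²_t, z²_{t+1}))` for `t < τ`. -/
abbrev Traj (X U1 Z1 U2 Z2 : Type) (τ : ℕ) : Type :=
  (Fin (τ + 1) → X) × (Fin τ → (U1 × Z1) × (U2 × Z2))

/-- The stage-`t` joint history determined by the first `t` moves of a trajectory. -/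
def histUpTo (τ : ℕ) (mv : Fin τ → (U1 × Z1) × (U2 × Z2)) (t : ℕ) (ht : t ≤ τ) :
    JHist U1 Z1 U2 Z2 t :=
  (fun i => (mv (Fin.castLE ht i)).1, fun i => (mv (Fin.castLE ht i)).2)

/-- Probability of a trajectory under the process induced by `s0` and a joint
policy: `x_0 ∼ s0`, `u_t ∼ a_t(·|o_t)`, `(x_{t+1}, z_{t+1}) ∼ p(·|x_t, u_t)`. -/
noncomputable def trajProb (p : X → U1 × U2 → X × (Z1 × Z2) → ℝ) (s0 : X → ℝ)
    (pol1 : (t : ℕ) → DR1 U1 Z1 t) (pol2 : (t : ℕ) → DR2 U2 Z2 t)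
    (τ : ℕ) (w : Traj X U1 Z1 U2 Z2 τ) : ℝ :=
  s0 (w.1 0) * ∏ t : Fin τ,
    ((pol1 t.1).1 (histUpTo τ w.2 t.1 t.isLt.le).1 ((w.2 t).1.1) *
     (pol2 t.1).1 (histUpTo τ w.2 t.1 t.isLt.le).2 ((w.2 t).2.1) *
     p (w.1 t.castSucc) ((w.2 t).1.1, (w.2 t).2.1)
       (w.1 t.succ, ((w.2 t).1.2, (w.2 t).2.2)))

variable [DecidableEq X] [DecidableEq U1] [DecidableEq U2] [DecidableEq Z1] [DecidableEq Z2]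

/-- The occupancy state induced by `(s0, a_0, …, a_{τ-1})`:
`s_τ(x,o) = Pr{x_τ = x, o_τ = o}`. -/
noncomputable def occInduced (p : X → U1 × U2 → X × (Z1 × Z2) → ℝ) (s0 : X → ℝ)
    (pol1 : (t : ℕ) → DR1 U1 Z1 t) (pol2 : (t : ℕ) → DR2 U2 Z2 t)
    (τ : ℕ) : X × JHist U1 Z1 U2 Z2 τ → ℝ := fun xo =>
  ∑ w : Traj X U1 Z1 U2 Z2 τ,
    if w.1 (Fin.last τ) = xo.1 ∧ histUpTo τ w.2 τ le_rfl = xo.2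
    then trajProb p s0 pol1 pol2 τ w else 0

/-- `α^{a_{τ:}}_τ(x,o)` defined by the backward recursion `α_ℓ ≡ 0` and
`α_τ(x,o) = Σ_u a_τ(u|o) [r(x,u) + γ Σ_{y,z} p(y,z|x,u) α_{τ+1}(y,(o,u,z))]`;
`alphaRec … k τ` is `α_τ` when `k = ℓ - τ` stages remain. -/
noncomputable def alphaRec (p : X → U1 × U2 → X × (Z1 × Z2) → ℝ) (r : X → U1 × U2 → ℝ)
    (γ : ℝ) (pol1 : (t : ℕ) → DR1 U1 Z1 t) (pol2 : (t : ℕ) → DR2 U2 Z2 t) :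
    (k : ℕ) → (τ : ℕ) → X → JHist U1 Z1 U2 Z2 τ → ℝ
  | 0, _, _, _ => 0
  | k + 1, τ, x, o =>
      ∑ u : U1 × U2, (pol1 τ).1 o.1 u.1 * (pol2 τ).1 o.2 u.2 *
        (r x u + γ * ∑ yz : X × (Z1 × Z2), p x u yz *
          alphaRec p r γ pol1 pol2 k (τ + 1) yz.1
            (Fin.snoc o.1 (u.1, yz.2.1), Fin.snoc o.2 (u.2, yz.2.2)))

/-- Expected discounted return `E[Σ_{t=τ}^{ℓ-1} γ^{t-τ} r(x_t, u_t)]` under the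
process induced by `s0` and the joint policy. -/
noncomputable def expReturnFrom (p : X → U1 × U2 → X × (Z1 × Z2) → ℝ)
    (r : X → U1 × U2 → ℝ) (γ : ℝ) (s0 : X → ℝ)
    (pol1 : (t : ℕ) → DR1 U1 Z1 t) (pol2 : (t : ℕ) → DR2 U2 Z2 t)
    (ℓ τ : ℕ) : ℝ :=
  ∑ w : Traj X U1 Z1 U2 Z2 ℓ, trajProb p s0 pol1 pol2 ℓ w *
    ∑ t : Fin ℓ, if τ ≤ t.1
      then γ ^ (t.1 - τ) * r (w.1 t.castSucc) ((w.2 t).1.1, (w.2 t).2.1) else 0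

end ZSPOSG

/-!
For fixed decision rules, `R(·, a)` is linear in the occupancy state with coefficients bounded
by any bound `M` of `|r|`, and `T(·, a)` is linear, nonnegative and mass-preserving, hence
non-expansive for the 1-norm. A max-min of two families that are uniformly `ε`-close is
`ε`-close, so backward induction makes `v*_τ` Lipschitz with constant
`M (1 + γ + ⋯ + γ^(ℓ-τ-1))`.
-/

open Finset

lemma exists_isDist {α : Type} [Fintype α] [Nonempty α] : ∃ f : α → ℝ, IsDist f :=
  ⟨fun _ => (Fintype.card α : ℝ)⁻¹, fun _ => by positivity, by simp⟩

lemma ciSup_ciInf_le_add {ι ι' α : Type*} [Nonempty ι] [Nonempty ι']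
    [ConditionallyCompleteLattice α] [AddGroup α] [AddRightMono α]
    {f g : ι → ι' → α} {ε : α} (hf : ∀ a, BddBelow (Set.range (f a)))
    (hg : BddAbove (Set.range fun a => ⨅ b, g a b)) (hfg : ∀ a b, f a b ≤ g a b + ε) :
    ⨆ a, ⨅ b, f a b ≤ (⨆ a, ⨅ b, g a b) + ε :=
  ciSup_le fun a => (le_ciInf_add fun b => ciInf_le_of_le (hf a) b (hfg a b)).trans
    (add_le_add_left (le_ciSup hg a) ε)

lemma abs_ciSup_ciInf_sub_le {ι ι' : Type*} [Nonempty ι] [Nonempty ι'] {f g : ι → ι' → ℝ}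
    {Bf Bg ε : ℝ} (hf : ∀ a b, |f a b| ≤ Bf) (hg : ∀ a b, |g a b| ≤ Bg)
    (hfg : ∀ a b, |f a b - g a b| ≤ ε) :
    |(⨆ a, ⨅ b, f a b) - ⨆ a, ⨅ b, g a b| ≤ ε := by
  have bddBelow {h : ι → ι' → ℝ} {B : ℝ} (hB : ∀ a b, |h a b| ≤ B) (a : ι) :
      BddBelow (Set.range (h a)) :=
    ⟨-B, by rintro _ ⟨b, rfl⟩; exact neg_le_of_abs_le (hB a b)⟩
  have bddAbove {h : ι → ι' → ℝ} {B : ℝ} (hB : ∀ a b, |h a b| ≤ B) :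
      BddAbove (Set.range fun a => ⨅ b, h a b) :=
    ⟨B, by
      rintro _ ⟨a, rfl⟩
      exact ciInf_le_of_le (bddBelow hB a) (Classical.arbitrary ι') (le_of_abs_le (hB a _))⟩
  rw [abs_sub_le_iff, sub_le_iff_le_add', sub_le_iff_le_add']
  exact ⟨ciSup_ciInf_le_add (bddBelow hf) (bddAbove hg) fun a b => by
      linarith [abs_le.1 (hfg a b)],
    ciSup_ciInf_le_add (bddBelow hg) (bddAbove hf) fun a b => by
      linarith [abs_le.1 (hfg a b)]⟩

section Lipschitz

variable {X U1 U2 Z1 Z2 : Type} [Fintype U1] [Fintype U2]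

instance [Nonempty U1] {τ : ℕ} : Nonempty (DR1 U1 Z1 τ) :=
  let ⟨f, hf⟩ := exists_isDist (α := U1)
  ⟨⟨fun _ => f, fun _ => hf⟩⟩

lemma sum_jointRule_eq_one {τ : ℕ} (a1 : DR1 U1 Z1 τ) (a2 : DR2 U2 Z2 τ)
    (o1 : Hist1 U1 Z1 τ) (o2 : Hist2 U2 Z2 τ) :
    ∑ u : U1 × U2, a1.1 o1 u.1 * a2.1 o2 u.2 = 1 := by
  rw [Fintype.sum_prod_type, ← sum_mul_sum, (a1.2 o1).2, (a2.2 o2).2, one_mul]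

variable [Fintype X]

lemma Tstage_zero (p : X → U1 × U2 → X × (Z1 × Z2) → ℝ) {τ : ℕ}
    (a1 : DR1 U1 Z1 τ) (a2 : DR2 U2 Z2 τ) : Tstage p τ 0 a1 a2 = 0 := by
  ext; simp [Tstage]

lemma abs_Tstage_sub_le (p : X → U1 × U2 → X × (Z1 × Z2) → ℝ) (hp : ∀ x u yz, 0 ≤ p x u yz)
    {τ : ℕ} (s s' : X × JHist U1 Z1 U2 Z2 τ → ℝ) (a1 : DR1 U1 Z1 τ) (a2 : DR2 U2 Z2 τ)
    (yo : X × JHist U1 Z1 U2 Z2 (τ + 1)) :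
    |Tstage p τ s a1 a2 yo - Tstage p τ s' a1 a2 yo| ≤
      Tstage p τ (fun xo => |s xo - s' xo|) a1 a2 yo := by
  simp only [Tstage]
  rw [← mul_sub, ← sum_sub_distrib, abs_mul,
    abs_of_nonneg (mul_nonneg (α := ℝ) ((a1.2 _).1 _) ((a2.2 _).1 _))]
  gcongr
  · exact mul_nonneg ((a1.2 _).1 _) ((a2.2 _).1 _)
  refine (abs_sum_le_sum_abs _ _).trans_eq (sum_congr rfl fun x _ => ?_)
  rw [← sub_mul, abs_mul, abs_of_nonneg (hp _ _ _)]

variable [Fintype Z1] [Fintype Z2]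

lemma abs_Rstage_sub_le (r : X → U1 × U2 → ℝ) {M : ℝ} (hM : ∀ x u, |r x u| ≤ M) {τ : ℕ}
    (s s' : X × JHist U1 Z1 U2 Z2 τ → ℝ) (a1 : DR1 U1 Z1 τ) (a2 : DR2 U2 Z2 τ) :
    |Rstage r τ s a1 a2 - Rstage r τ s' a1 a2| ≤ M * dist1 s s' := by
  have hexp (xo : X × JHist U1 Z1 U2 Z2 τ) :
      |∑ u : U1 × U2, a1.1 xo.2.1 u.1 * a2.1 xo.2.2 u.2 * r xo.1 u| ≤ M :=
    calc _ ≤ ∑ u : U1 × U2, a1.1 xo.2.1 u.1 * a2.1 xo.2.2 u.2 * M := by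
          refine (abs_sum_le_sum_abs _ _).trans (sum_le_sum fun u _ => ?_)
          have ha := mul_nonneg ((a1.2 xo.2.1).1 u.1) ((a2.2 xo.2.2).1 u.2)
          rw [abs_mul, abs_of_nonneg ha]
          exact mul_le_mul_of_nonneg_left (hM _ _) ha
      _ = M := by rw [← sum_mul, sum_jointRule_eq_one, one_mul]
  calc |Rstage r τ s a1 a2 - Rstage r τ s' a1 a2|
      = |∑ xo, (s xo - s' xo) *
          ∑ u : U1 × U2, a1.1 xo.2.1 u.1 * a2.1 xo.2.2 u.2 * r xo.1 u| := by
        simp only [Rstage, ← sum_sub_distrib, sub_mul]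
    _ ≤ ∑ xo, |s xo - s' xo| * M := by
        refine (abs_sum_le_sum_abs _ _).trans (sum_le_sum fun xo _ => ?_)
        rw [abs_mul]
        exact mul_le_mul_of_nonneg_left (hexp xo) (abs_nonneg _)
    _ = M * dist1 s s' := by rw [dist1, mul_sum]; simp only [mul_comm]

def histSnocEquiv (τ : ℕ) :
    JHist U1 Z1 U2 Z2 τ × (U1 × U2) × X × (Z1 × Z2) ≃ X × JHist U1 Z1 U2 Z2 (τ + 1) where
  toFun t := (t.2.2.1, Fin.snoc t.1.1 (t.2.1.1, t.2.2.2.1), Fin.snoc t.1.2 (t.2.1.2, t.2.2.2.2))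
  invFun yo := ((Fin.init yo.2.1, Fin.init yo.2.2),
    ((yo.2.1 (Fin.last τ)).1, (yo.2.2 (Fin.last τ)).1),
    yo.1, (yo.2.1 (Fin.last τ)).2, (yo.2.2 (Fin.last τ)).2)
  left_inv t := by simp
  right_inv yo := by simp

lemma sum_Tstage (p : X → U1 × U2 → X × (Z1 × Z2) → ℝ) (hp : ∀ x u, ∑ yz, p x u yz = 1)
    {τ : ℕ} (f : X × JHist U1 Z1 U2 Z2 τ → ℝ) (a1 : DR1 U1 Z1 τ) (a2 : DR2 U2 Z2 τ) :
    ∑ yo, Tstage p τ f a1 a2 yo = ∑ xo, f xo := by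
  rw [← (histSnocEquiv τ).sum_comp]
  simp only [histSnocEquiv, Tstage, Equiv.coe_fn_mk, Fin.snoc_castSucc, Fin.snoc_last]
  calc ∑ t : JHist U1 Z1 U2 Z2 τ × (U1 × U2) × X × (Z1 × Z2),
        a1.1 t.1.1 t.2.1.1 * a2.1 t.1.2 t.2.1.2 * ∑ x, f (x, t.1) * p x t.2.1 t.2.2
      = ∑ o : JHist U1 Z1 U2 Z2 τ, ∑ x, f (x, o) *
          ∑ u : U1 × U2, a1.1 o.1 u.1 * a2.1 o.2 u.2 * ∑ yz, p x u yz := by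
        rw [Fintype.sum_prod_type]
        refine sum_congr rfl fun o _ => ?_
        simp only [mul_sum]
        rw [sum_comm]
        refine sum_congr rfl fun x _ => ?_
        rw [Fintype.sum_prod_type]
        exact sum_congr rfl fun u _ => sum_congr rfl fun yz _ => by ring
    _ = ∑ xo, f xo := by
        simp only [hp, mul_one, sum_jointRule_eq_one]
        exact (Fintype.sum_prod_type_right f).symm

lemma dist1_Tstage_le (p : X → U1 × U2 → X × (Z1 × Z2) → ℝ) (hp : ∀ x u, IsDist (p x u))
    {τ : ℕ} (s s' : X × JHist U1 Z1 U2 Z2 τ → ℝ) (a1 : DR1 U1 Z1 τ) (a2 : DR2 U2 Z2 τ) :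
    dist1 (Tstage p τ s a1 a2) (Tstage p τ s' a1 a2) ≤ dist1 s s' :=
  calc dist1 (Tstage p τ s a1 a2) (Tstage p τ s' a1 a2)
      ≤ ∑ yo, Tstage p τ (fun xo => |s xo - s' xo|) a1 a2 yo :=
        sum_le_sum fun yo _ => abs_Tstage_sub_le p (fun x u => (hp x u).1) s s' a1 a2 yo
    _ = dist1 s s' := sum_Tstage p (fun x u => (hp x u).2) _ a1 a2

lemma Rstage_zero (r : X → U1 × U2 → ℝ) {τ : ℕ} (a1 : DR1 U1 Z1 τ) (a2 : DR2 U2 Z2 τ) :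
    Rstage r τ (0 : X × JHist U1 Z1 U2 Z2 τ → ℝ) a1 a2 = 0 := by
  simp [Rstage]

noncomputable def qstar (p : X → U1 × U2 → X × (Z1 × Z2) → ℝ) (r : X → U1 × U2 → ℝ) (γ : ℝ)
    (k τ : ℕ) (s : X × JHist U1 Z1 U2 Z2 τ → ℝ) (a1 : DR1 U1 Z1 τ) (a2 : DR2 U2 Z2 τ) : ℝ :=
  Rstage r τ s a1 a2 + γ * vstar p r γ k (τ + 1) (Tstage p τ s a1 a2)

variable {p : X → U1 × U2 → X × (Z1 × Z2) → ℝ} {r : X → U1 × U2 → ℝ} {γ : ℝ}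

lemma vstar_succ (k τ : ℕ) (s : X × JHist U1 Z1 U2 Z2 τ → ℝ) :
    vstar p r γ (k + 1) τ s = ⨆ a1, ⨅ a2, qstar p r γ k τ s a1 a2 :=
  rfl

lemma abs_qstar_sub_le (hp : ∀ x u, IsDist (p x u)) (hγ : 0 ≤ γ) {M : ℝ}
    (hM : ∀ x u, |r x u| ≤ M) {k τ : ℕ} {κ : ℝ} (hκ : 0 ≤ κ)
    (hv : ∀ t t' : X × JHist U1 Z1 U2 Z2 (τ + 1) → ℝ,
      |vstar p r γ k (τ + 1) t - vstar p r γ k (τ + 1) t'| ≤ κ * dist1 t t')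
    (s s' : X × JHist U1 Z1 U2 Z2 τ → ℝ) (a1 : DR1 U1 Z1 τ) (a2 : DR2 U2 Z2 τ) :
    |qstar p r γ k τ s a1 a2 - qstar p r γ k τ s' a1 a2| ≤ (M + γ * κ) * dist1 s s' := by
  have hT := (hv (Tstage p τ s a1 a2) (Tstage p τ s' a1 a2)).trans
    (mul_le_mul_of_nonneg_left (dist1_Tstage_le p hp s s' a1 a2) hκ)
  calc |qstar p r γ k τ s a1 a2 - qstar p r γ k τ s' a1 a2|
      ≤ |Rstage r τ s a1 a2 - Rstage r τ s' a1 a2| +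
          γ * |vstar p r γ k (τ + 1) (Tstage p τ s a1 a2) -
            vstar p r γ k (τ + 1) (Tstage p τ s' a1 a2)| := by
        rw [qstar, qstar, add_sub_add_comm, ← mul_sub]
        exact (abs_add_le _ _).trans_eq (by rw [abs_mul, abs_of_nonneg hγ])
    _ ≤ M * dist1 s s' + γ * (κ * dist1 s s') :=
        add_le_add (abs_Rstage_sub_le r hM s s' a1 a2) (mul_le_mul_of_nonneg_left hT hγ)
    _ = (M + γ * κ) * dist1 s s' := by ring

variable [Nonempty U1] [Nonempty U2]

lemma vstar_apply_zero : ∀ k τ, vstar p r γ k τ (0 : X × JHist U1 Z1 U2 Z2 τ → ℝ) = 0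
  | 0, _ => rfl
  | k + 1, τ => by
    simp only [vstar_succ, qstar, Rstage_zero, Tstage_zero, vstar_apply_zero k, mul_zero,
      add_zero, ciInf_const, ciSup_const]

lemma qstar_apply_zero (k τ : ℕ) (a1 : DR1 U1 Z1 τ) (a2 : DR2 U2 Z2 τ) :
    qstar p r γ k τ 0 a1 a2 = 0 := by
  rw [qstar, Rstage_zero, Tstage_zero, vstar_apply_zero, mul_zero, add_zero]

theorem abs_vstar_sub_le (hp : ∀ x u, IsDist (p x u)) (hγ : 0 ≤ γ) {M : ℝ} (hM0 : 0 ≤ M)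
    (hM : ∀ x u, |r x u| ≤ M) (k τ : ℕ) (s s' : X × JHist U1 Z1 U2 Z2 τ → ℝ) :
    |vstar p r γ k τ s - vstar p r γ k τ s'| ≤ (M * ∑ i ∈ range k, γ ^ i) * dist1 s s' := by
  induction k generalizing τ with
  | zero => simp [vstar]
  | succ k ih =>
    have hκ : 0 ≤ M * ∑ i ∈ range k, γ ^ i := by positivity
    have hq := abs_qstar_sub_le hp hγ hM hκ (ih (τ + 1))
    -- `⨆` and `⨅` on `ℝ` are junk on unbounded families; the bound comes from comparing with
    -- the zero state, where `qstar` vanishes.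
    have hbound (t : X × JHist U1 Z1 U2 Z2 τ → ℝ) a1 a2 :
        |qstar p r γ k τ t a1 a2| ≤ (M + γ * (M * ∑ i ∈ range k, γ ^ i)) * dist1 t 0 := by
      simpa only [qstar_apply_zero, sub_zero] using hq t 0 a1 a2
    rw [vstar_succ, vstar_succ, geom_sum_succ]
    convert abs_ciSup_ciInf_sub_le (hbound s) (hbound s') (hq s s') using 1
    ring

end Lipschitz

section ZSPOSG

variable {X U1 U2 Z1 Z2 : Type}
variable [Fintype X] [Fintype U1] [Fintype U2] [Fintype Z1] [Fintype Z2]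
variable [DecidableEq X] [DecidableEq U1] [DecidableEq U2] [DecidableEq Z1] [DecidableEq Z2]

theorem stmt1_general
    [Nonempty U1] [Nonempty U2]
    (p : X → U1 × U2 → X × (Z1 × Z2) → ℝ) (r : X → U1 × U2 → ℝ)
    (γ : ℝ) (ℓ : ℕ)
    (hp : ∀ x u, IsDist (p x u)) (hγ0 : 0 ≤ γ)
    (τ : ℕ) :
    ∃ κ : ℝ, 0 ≤ κ ∧
      ∀ s s' : X × JHist U1 Z1 U2 Z2 τ → ℝ, IsDist s → IsDist s' →
        |vstar p r γ (ℓ - τ) τ s - vstar p r γ (ℓ - τ) τ s'| ≤ κ * dist1 s s' := by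
  set M := ∑ xu : X × (U1 × U2), |r xu.1 xu.2|
  have hM0 : 0 ≤ M := sum_nonneg fun _ _ => abs_nonneg _
  have hM (x : X) (u : U1 × U2) : |r x u| ≤ M :=
    single_le_sum (f := fun xu : X × (U1 × U2) => |r xu.1 xu.2|)
      (fun _ _ => abs_nonneg _) (mem_univ (x, u))
  exact ⟨M * ∑ i ∈ range (ℓ - τ), γ ^ i, by positivity,
    fun s s' _ _ => abs_vstar_sub_le hp hγ0 hM0 hM (ℓ - τ) τ s s'⟩

/-- adapted from Delage et al. 2023: for every stage `τ ∈ {0,…,ℓ}` of a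
finite zs-POSG there is a constant `κ_τ ≥ 0` such that the optimal value function `v*_τ`
is `κ_τ`-Lipschitz over occupancy states w.r.t. the 1-norm. -/
theorem stmt1
    [Nonempty X] [Nonempty U1] [Nonempty U2] [Nonempty Z1] [Nonempty Z2]
    (p : X → U1 × U2 → X × (Z1 × Z2) → ℝ) (r : X → U1 × U2 → ℝ)
    (s0 : X → ℝ) (γ : ℝ) (ℓ : ℕ)
    (hp : ∀ x u, IsDist (p x u)) (hs0 : IsDist s0) (hγ0 : 0 ≤ γ) (hγ1 : γ < 1)
    (τ : ℕ) (hτ : τ ≤ ℓ) :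
    ∃ κ : ℝ, 0 ≤ κ ∧
      ∀ s s' : X × JHist U1 Z1 U2 Z2 τ → ℝ, IsDist s → IsDist s' →
        |vstar p r γ (ℓ - τ) τ s - vstar p r γ (ℓ - τ) τ s'| ≤ κ * dist1 s s' :=
  stmt1_general p r γ ℓ hp hγ0 τ

end ZSPOSG
end

section
/- In a finite zs-POSG, the occupancy state is a sufficient statistic of the information state ι_τ = (s0, a_0, …, a_{τ−1}) for both immediate rewards and transitions: for every stage τ and joint decision rules a_0, …, a_τ, (i) the occupancy state s_{τ+1} induced by (s0, a_0, …, a_τ) satisfies s_{τ+1}(y, (o, u, z)) = a_τ(u | o) · Σ_{x ∈ X} s_τ(x, o) · p(y, z | x, u) for all y ∈ X, o ∈ O_τ, u ∈ U, z ∈ Z, i.e. s_{τ+1} = T(s_τ, a_τ), where s_τ is the occupancy state induced by (s0, a_0, …, a_{τ−1}); and (ii) the expected stage-τ reward satisfies E[r(x_τ, u_τ)] = R(s_τ, a_τ). -/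
open scoped BigOperators

/-!
A trajectory of length `τ + 1` is a trajectory of length `τ` extended by one joint control `u`
and one outcome `(y, z)`, and its probability factors as that of the prefix times
`a_τ(u | o_τ) p(y, z | x_τ, u)`. Summing this factorisation against the indicator of
`(x_{τ+1}, o_{τ+1})` gives `T(s_τ, a_τ)`, and against `r(x_τ, u_τ)`, after summing `p` out over
`(y, z)`, gives `R(s_τ, a_τ)`: in both cases what remains is a sum over prefixes of a function of
`(x_τ, o_τ)` only, that is, an expectation under the occupancy state `s_τ`.
-/

section Histories

variable {U1 U2 Z1 Z2 : Type} {τ : ℕ}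

theorem histUpTo_snoc_of_le (mv : Fin τ → (U1 × Z1) × (U2 × Z2)) (m : (U1 × Z1) × (U2 × Z2))
    {t : ℕ} (ht : t ≤ τ) (ht' : t ≤ τ + 1) :
    histUpTo (τ + 1) (Fin.snoc mv m) t ht' = histUpTo τ mv t ht := by
  have h (i : Fin t) :
      (Fin.snoc mv m : Fin (τ + 1) → _) (Fin.castLE ht' i) = mv (Fin.castLE ht i) :=
    Fin.snoc_castSucc (α := fun _ => _) (i := Fin.castLE ht i) ..
  simp only [histUpTo, h]

theorem histUpTo_snoc_self (mv : Fin τ → (U1 × Z1) × (U2 × Z2)) (m : (U1 × Z1) × (U2 × Z2)) :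
    histUpTo (τ + 1) (Fin.snoc mv m) (τ + 1) le_rfl =
      (Fin.snoc (histUpTo τ mv τ le_rfl).1 m.1, Fin.snoc (histUpTo τ mv τ le_rfl).2 m.2) := by
  ext i <;> induction i using Fin.lastCases <;> simp [histUpTo]

end Histories

namespace Traj

variable {X U1 U2 Z1 Z2 : Type} {τ : ℕ}

def extend (w : Traj X U1 Z1 U2 Z2 τ) (u : U1 × U2) (yz : X × (Z1 × Z2)) :
    Traj X U1 Z1 U2 Z2 (τ + 1) :=
  (Fin.snoc w.1 yz.1, Fin.snoc w.2 ((u.1, yz.2.1), (u.2, yz.2.2)))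

def extendEquiv :
    Traj X U1 Z1 U2 Z2 τ × (U1 × U2) × (X × (Z1 × Z2)) ≃ Traj X U1 Z1 U2 Z2 (τ + 1) where
  toFun w := w.1.extend w.2.1 w.2.2
  invFun w :=
    let m := w.2 (Fin.last τ)
    ((Fin.init w.1, Fin.init w.2), (m.1.1, m.2.1), (w.1 (Fin.last (τ + 1)), (m.1.2, m.2.2)))
  left_inv w := by simp [extend]
  right_inv w := by simp [extend, Fin.snoc_init_self]

theorem sum_succ_eq_sum_extend [Fintype X] [Fintype U1] [Fintype U2] [Fintype Z1] [Fintype Z2]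
    {M : Type} [AddCommMonoid M] (F : Traj X U1 Z1 U2 Z2 (τ + 1) → M) :
    ∑ w, F w = ∑ w : Traj X U1 Z1 U2 Z2 τ, ∑ u : U1 × U2, ∑ yz : X × (Z1 × Z2),
      F (w.extend u yz) := by
  rw [← extendEquiv.sum_comp]
  simp only [Fintype.sum_prod_type]
  rfl

end Traj

section Occupancy

variable {X U1 U2 Z1 Z2 : Type} [Fintype U1] [Fintype U2]
  (p : X → U1 × U2 → X × (Z1 × Z2) → ℝ) (s0 : X → ℝ)
  (pol1 : (t : ℕ) → DR1 U1 Z1 t) (pol2 : (t : ℕ) → DR2 U2 Z2 t) {τ : ℕ}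

theorem trajProb_extend (w : Traj X U1 Z1 U2 Z2 τ) (u : U1 × U2) (yz : X × (Z1 × Z2)) :
    trajProb p s0 pol1 pol2 (τ + 1) (w.extend u yz) =
      trajProb p s0 pol1 pol2 τ w *
        ((pol1 τ).1 (histUpTo τ w.2 τ le_rfl).1 u.1 * (pol2 τ).1 (histUpTo τ w.2 τ le_rfl).2 u.2 *
          p (w.1 (Fin.last τ)) u yz) := by
  simp [trajProb, Traj.extend, Fin.prod_univ_castSucc, histUpTo_snoc_of_le, Fin.succ_castSucc,
    -Fin.castSucc_succ, mul_assoc]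

variable [Fintype X] [Fintype Z1] [Fintype Z2]

theorem sum_trajProb_succ_mul (F : Traj X U1 Z1 U2 Z2 (τ + 1) → ℝ) :
    ∑ w, trajProb p s0 pol1 pol2 (τ + 1) w * F w =
      ∑ w : Traj X U1 Z1 U2 Z2 τ, trajProb p s0 pol1 pol2 τ w *
        ∑ u : U1 × U2, (pol1 τ).1 (histUpTo τ w.2 τ le_rfl).1 u.1 *
          (pol2 τ).1 (histUpTo τ w.2 τ le_rfl).2 u.2 *
            ∑ yz : X × (Z1 × Z2), p (w.1 (Fin.last τ)) u yz * F (w.extend u yz) := by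
  simp only [Traj.sum_succ_eq_sum_extend, trajProb_extend, Finset.mul_sum, mul_assoc]

variable [DecidableEq X] [DecidableEq U1] [DecidableEq U2] [DecidableEq Z1] [DecidableEq Z2]

theorem sum_occInduced_mul (f : X × JHist U1 Z1 U2 Z2 τ → ℝ) :
    ∑ xo, occInduced p s0 pol1 pol2 τ xo * f xo =
      ∑ w : Traj X U1 Z1 U2 Z2 τ, trajProb p s0 pol1 pol2 τ w *
        f (w.1 (Fin.last τ), histUpTo τ w.2 τ le_rfl) := by
  simp only [occInduced, Finset.sum_mul]
  rw [Finset.sum_comm]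
  refine Finset.sum_congr rfl fun w _ => ?_
  simp_rw [← Prod.ext_iff (x := (_, _)), ite_mul, zero_mul]
  simp

theorem occInduced_eq_sum_trajProb_mul_ite (xo : X × JHist U1 Z1 U2 Z2 τ) :
    occInduced p s0 pol1 pol2 τ xo =
      ∑ w : Traj X U1 Z1 U2 Z2 τ, trajProb p s0 pol1 pol2 τ w *
        if (w.1 (Fin.last τ), histUpTo τ w.2 τ le_rfl) = xo then 1 else 0 := by
  rw [← sum_occInduced_mul p s0 pol1 pol2 fun xo' => if xo' = xo then 1 else 0]
  simp

theorem occInduced_succ_snoc (y : X) (o : JHist U1 Z1 U2 Z2 τ) (u : U1 × U2) (z : Z1 × Z2) :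
    occInduced p s0 pol1 pol2 (τ + 1) (y, (Fin.snoc o.1 (u.1, z.1), Fin.snoc o.2 (u.2, z.2))) =
      (pol1 τ).1 o.1 u.1 * (pol2 τ).1 o.2 u.2 *
        ∑ x : X, occInduced p s0 pol1 pol2 τ (x, o) * p x u (y, z) := by
  have hlhs : occInduced p s0 pol1 pol2 (τ + 1)
      (y, (Fin.snoc o.1 (u.1, z.1), Fin.snoc o.2 (u.2, z.2))) =
      ∑ w : Traj X U1 Z1 U2 Z2 τ, trajProb p s0 pol1 pol2 τ w *
        ((pol1 τ).1 o.1 u.1 * (pol2 τ).1 o.2 u.2 *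
          if histUpTo τ w.2 τ le_rfl = o then p (w.1 (Fin.last τ)) u (y, z) else 0) := by
    rw [occInduced_eq_sum_trajProb_mul_ite, sum_trajProb_succ_mul]
    refine Finset.sum_congr rfl fun w _ => congrArg _ ?_
    have hcond (u' : U1 × U2) (yz' : X × (Z1 × Z2)) :
        ((w.extend u' yz').1 (Fin.last (τ + 1)),
            histUpTo (τ + 1) (w.extend u' yz').2 (τ + 1) le_rfl) =
            (y, (Fin.snoc o.1 (u.1, z.1), Fin.snoc o.2 (u.2, z.2))) ↔
          u' = u ∧ yz' = (y, z) ∧ histUpTo τ w.2 τ le_rfl = o := by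
      simp only [Traj.extend, Fin.snoc_last, histUpTo_snoc_self, Prod.ext_iff, Fin.snoc_inj]
      tauto
    simp_rw [hcond, ite_and]
    simp only [mul_ite, mul_one, mul_zero, Finset.sum_ite_irrel, Finset.sum_ite_eq',
      Finset.mem_univ, if_true, Finset.sum_const_zero]
    split_ifs with hw
    · rw [hw]
    · rfl
  have hrhs : ∑ x : X, occInduced p s0 pol1 pol2 τ (x, o) * p x u (y, z) =
      ∑ w : Traj X U1 Z1 U2 Z2 τ, trajProb p s0 pol1 pol2 τ w *
        if histUpTo τ w.2 τ le_rfl = o then p (w.1 (Fin.last τ)) u (y, z) else 0 := by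
    rw [← sum_occInduced_mul p s0 pol1 pol2 fun xo => if xo.2 = o then p xo.1 u (y, z) else 0,
      Fintype.sum_prod_type]
    simp
  rw [hlhs, hrhs, Finset.mul_sum]
  exact Finset.sum_congr rfl fun w _ => by ring

theorem sum_trajProb_succ_mul_reward (hp : ∀ x u, IsDist (p x u)) (r : X → U1 × U2 → ℝ) :
    ∑ w : Traj X U1 Z1 U2 Z2 (τ + 1), trajProb p s0 pol1 pol2 (τ + 1) w *
        r (w.1 (Fin.castSucc (Fin.last τ))) ((w.2 (Fin.last τ)).1.1, (w.2 (Fin.last τ)).2.1) =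
      Rstage r τ (occInduced p s0 pol1 pol2 τ) (pol1 τ) (pol2 τ) := by
  rw [sum_trajProb_succ_mul, Rstage, sum_occInduced_mul]
  refine Finset.sum_congr rfl fun w _ => congrArg _ (Finset.sum_congr rfl fun u _ => ?_)
  simp only [Traj.extend, Fin.snoc_castSucc, Fin.snoc_last]
  rw [← Finset.sum_mul, (hp _ _).2, one_mul]

end Occupancy

section Transition

variable {X U1 U2 Z1 Z2 : Type} {τ : ℕ}

theorem Tstage_snoc [Fintype X] [Fintype U1] [Fintype U2] (p : X → U1 × U2 → X × (Z1 × Z2) → ℝ)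
    (s : X × JHist U1 Z1 U2 Z2 τ → ℝ) (a1 : DR1 U1 Z1 τ) (a2 : DR2 U2 Z2 τ)
    (y : X) (o : JHist U1 Z1 U2 Z2 τ) (u : U1 × U2) (z : Z1 × Z2) :
    Tstage p τ s a1 a2 (y, (Fin.snoc o.1 (u.1, z.1), Fin.snoc o.2 (u.2, z.2))) =
      a1.1 o.1 u.1 * a2.1 o.2 u.2 * ∑ x : X, s (x, o) * p x u (y, z) := by
  simp [Tstage]

theorem funext_of_snoc {β : Type} {f g : X × JHist U1 Z1 U2 Z2 (τ + 1) → β}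
    (h : ∀ y (o : JHist U1 Z1 U2 Z2 τ) (u : U1 × U2) (z : Z1 × Z2),
      f (y, (Fin.snoc o.1 (u.1, z.1), Fin.snoc o.2 (u.2, z.2))) =
        g (y, (Fin.snoc o.1 (u.1, z.1), Fin.snoc o.2 (u.2, z.2)))) :
    f = g := by
  funext ⟨y, o1, o2⟩
  rw [← Fin.snoc_init_self o1, ← Fin.snoc_init_self o2]
  exact h y (Fin.init o1, Fin.init o2) ((o1 (Fin.last τ)).1, (o2 (Fin.last τ)).1)
    ((o1 (Fin.last τ)).2, (o2 (Fin.last τ)).2)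

end Transition

section ZSPOSG

variable {X U1 U2 Z1 Z2 : Type}
variable [Fintype X] [Fintype U1] [Fintype U2] [Fintype Z1] [Fintype Z2]
variable [DecidableEq X] [DecidableEq U1] [DecidableEq U2] [DecidableEq Z1] [DecidableEq Z2]

theorem stmt6_general
    (p : X → U1 × U2 → X × (Z1 × Z2) → ℝ) (r : X → U1 × U2 → ℝ)
    (s0 : X → ℝ)
    (hp : ∀ x u, IsDist (p x u))
    (pol1 : (t : ℕ) → DR1 U1 Z1 t) (pol2 : (t : ℕ) → DR2 U2 Z2 t) (τ : ℕ) :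
    (∀ (y : X) (o : JHist U1 Z1 U2 Z2 τ) (u : U1 × U2) (z : Z1 × Z2),
        occInduced p s0 pol1 pol2 (τ + 1)
            (y, (Fin.snoc o.1 (u.1, z.1), Fin.snoc o.2 (u.2, z.2))) =
          (pol1 τ).1 o.1 u.1 * (pol2 τ).1 o.2 u.2 *
            ∑ x : X, occInduced p s0 pol1 pol2 τ (x, o) * p x u (y, z)) ∧
      occInduced p s0 pol1 pol2 (τ + 1) =
        Tstage p τ (occInduced p s0 pol1 pol2 τ) (pol1 τ) (pol2 τ) ∧
      (∑ w : Traj X U1 Z1 U2 Z2 (τ + 1), trajProb p s0 pol1 pol2 (τ + 1) w *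
          r (w.1 (Fin.castSucc (Fin.last τ)))
            ((w.2 (Fin.last τ)).1.1, (w.2 (Fin.last τ)).2.1)) =
        Rstage r τ (occInduced p s0 pol1 pol2 τ) (pol1 τ) (pol2 τ) :=
  ⟨occInduced_succ_snoc p s0 pol1 pol2,
    funext_of_snoc fun y o u z =>
      (occInduced_succ_snoc p s0 pol1 pol2 y o u z).trans (Tstage_snoc p _ _ _ y o u z).symm,
    sum_trajProb_succ_mul_reward p s0 pol1 pol2 hp r⟩

/-- the occupancy state is a sufficient statistic of the information
state for rewards and transitions: (i) the occupancy state induced by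
`(s0, a_0, …, a_τ)` satisfies
`s_{τ+1}(y,(o,u,z)) = a_τ(u|o) Σ_x s_τ(x,o) p(y,z|x,u)`, i.e. `s_{τ+1} = T(s_τ, a_τ)`;
and (ii) the expected stage-`τ` reward satisfies `E[r(x_τ, u_τ)] = R(s_τ, a_τ)`. -/
theorem stmt6
    [Nonempty X] [Nonempty U1] [Nonempty U2] [Nonempty Z1] [Nonempty Z2]
    (p : X → U1 × U2 → X × (Z1 × Z2) → ℝ) (r : X → U1 × U2 → ℝ)
    (s0 : X → ℝ) (γ : ℝ) (ℓ : ℕ)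
    (hp : ∀ x u, IsDist (p x u)) (hs0 : IsDist s0) (hγ0 : 0 ≤ γ) (hγ1 : γ < 1)
    (pol1 : (t : ℕ) → DR1 U1 Z1 t) (pol2 : (t : ℕ) → DR2 U2 Z2 t) (τ : ℕ) :
    (∀ (y : X) (o : JHist U1 Z1 U2 Z2 τ) (u : U1 × U2) (z : Z1 × Z2),
        occInduced p s0 pol1 pol2 (τ + 1)
            (y, (Fin.snoc o.1 (u.1, z.1), Fin.snoc o.2 (u.2, z.2))) =
          (pol1 τ).1 o.1 u.1 * (pol2 τ).1 o.2 u.2 *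
            ∑ x : X, occInduced p s0 pol1 pol2 τ (x, o) * p x u (y, z)) ∧
      occInduced p s0 pol1 pol2 (τ + 1) =
        Tstage p τ (occInduced p s0 pol1 pol2 τ) (pol1 τ) (pol2 τ) ∧
      (∑ w : Traj X U1 Z1 U2 Z2 (τ + 1), trajProb p s0 pol1 pol2 (τ + 1) w *
          r (w.1 (Fin.castSucc (Fin.last τ)))
            ((w.2 (Fin.last τ)).1.1, (w.2 (Fin.last τ)).2.1)) =
        Rstage r τ (occInduced p s0 pol1 pol2 τ) (pol1 τ) (pol2 τ) :=
  stmt6_general p r s0 hp pol1 pol2 τ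

end ZSPOSG
end

section
/- In a finite zs-POSG with public actions and observations, each player's history determines the joint history on the support of any reachable occupancy state: for every stage τ, every sequence of joint decision rules (a_0, …, a_{τ−1}) inducing occupancy state s_τ from s0, and every player-2 history o² with positive marginal s^m_τ(o²) > 0, there is exactly one player-1 history o¹ ∈ O¹_τ such that Σ_x s_τ(x, (o¹, o²)) > 0. Consequently, each conditional occupancy state s^{c,o²}_τ is supported on a single player-1 history and is therefore determined by a belief state, i.e., a probability distribution over the hidden states X. -/
/-!
With public actions and observations, the observation `z²` that player 2 receives at a step
reveals through `f_pao` the joint observation and the joint control of that step, in particular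
player 1's control and observation. Hence along every trajectory of positive probability
player 1's history is a fixed function of player 2's history, so the occupancy state vanishes
off the graph of that function. Given `o²`, only one player-1 history carries mass, and the
normalized slice of the occupancy state at that history is the belief state.
-/

open scoped BigOperators

section PublicHistories

variable {X U1 U2 Z1 Z2 : Type}

noncomputable def publicHist1 (fpao : Z1 ⊕ Z2 → (Z1 × Z2) × (U1 × U2))
    {τ : ℕ} (o2 : Hist2 U2 Z2 τ) : Hist1 U1 Z1 τ :=
  fun i => ((fpao (Sum.inr (o2 i).2)).2.1, (fpao (Sum.inr (o2 i).2)).1.1)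

section Support

variable [Fintype U1] [Fintype U2] (p : X → U1 × U2 → X × (Z1 × Z2) → ℝ) (s0 : X → ℝ)
  (pol1 : (t : ℕ) → DR1 U1 Z1 t) (pol2 : (t : ℕ) → DR2 U2 Z2 t) {τ : ℕ}

theorem trajProb_nonneg (hp : ∀ x u yz, 0 ≤ p x u yz) (hs0 : ∀ x, 0 ≤ s0 x)
    (w : Traj X U1 Z1 U2 Z2 τ) : 0 ≤ trajProb p s0 pol1 pol2 τ w :=
  mul_nonneg (hs0 _) <| Finset.prod_nonneg fun t _ =>
    mul_nonneg (mul_nonneg (((pol1 t).2 _).1 _) (((pol2 t).2 _).1 _)) (hp _ _ _)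

theorem transition_pos_of_trajProb_ne_zero (hp : ∀ x u yz, 0 ≤ p x u yz)
    {w : Traj X U1 Z1 U2 Z2 τ} (hw : trajProb p s0 pol1 pol2 τ w ≠ 0) (t : Fin τ) :
    0 < p (w.1 t.castSucc) ((w.2 t).1.1, (w.2 t).2.1)
      (w.1 t.succ, ((w.2 t).1.2, (w.2 t).2.2)) := by
  refine (hp _ _ _).lt_of_ne fun hzero => hw ?_
  rw [trajProb, Finset.prod_eq_zero (Finset.mem_univ t) (by rw [← hzero, mul_zero]), mul_zero]

theorem hist1_eq_publicHist1_of_trajProb_ne_zero (hp : ∀ x u yz, 0 ≤ p x u yz)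
    {fpao : Z1 ⊕ Z2 → (Z1 × Z2) × (U1 × U2)}
    (hpao : ∀ (x : X) (u : U1 × U2) (y : X) (z : Z1 × Z2), 0 < p x u (y, z) →
      fpao (Sum.inl z.1) = (z, u) ∧ fpao (Sum.inr z.2) = (z, u))
    {w : Traj X U1 Z1 U2 Z2 τ} (hw : trajProb p s0 pol1 pol2 τ w ≠ 0) :
    (histUpTo τ w.2 τ le_rfl).1 = publicHist1 fpao (histUpTo τ w.2 τ le_rfl).2 := by
  funext t
  have hpub := (hpao _ _ _ _ (transition_pos_of_trajProb_ne_zero p s0 pol1 pol2 hp hw t)).2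
  simp only [histUpTo, publicHist1, Fin.castLE_refl, hpub]

variable [Fintype X] [Fintype Z1] [Fintype Z2]
  [DecidableEq X] [DecidableEq U1] [DecidableEq U2] [DecidableEq Z1] [DecidableEq Z2]

theorem occInduced_nonneg (hp : ∀ x u yz, 0 ≤ p x u yz) (hs0 : ∀ x, 0 ≤ s0 x)
    (xo : X × JHist U1 Z1 U2 Z2 τ) : 0 ≤ occInduced p s0 pol1 pol2 τ xo :=
  Finset.sum_nonneg fun w _ => by
    split
    · exact trajProb_nonneg p s0 pol1 pol2 hp hs0 w
    · exact le_rfl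

theorem occInduced_eq_zero_of_ne_publicHist1 (hp : ∀ x u yz, 0 ≤ p x u yz)
    {fpao : Z1 ⊕ Z2 → (Z1 × Z2) × (U1 × U2)}
    (hpao : ∀ (x : X) (u : U1 × U2) (y : X) (z : Z1 × Z2), 0 < p x u (y, z) →
      fpao (Sum.inl z.1) = (z, u) ∧ fpao (Sum.inr z.2) = (z, u))
    (x : X) {o1 : Hist1 U1 Z1 τ} {o2 : Hist2 U2 Z2 τ} (hne : o1 ≠ publicHist1 fpao o2) :
    occInduced p s0 pol1 pol2 τ (x, (o1, o2)) = 0 := by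
  refine Finset.sum_eq_zero fun w _ => ite_eq_right_iff.mpr fun hw => ?_
  by_contra hpos
  have hpublic := hist1_eq_publicHist1_of_trajProb_ne_zero p s0 pol1 pol2 hp hpao hpos
  rw [hw.2] at hpublic
  exact hne hpublic

end Support

section SingleHistorySupport

variable [Fintype X] [Fintype U1] [Fintype Z1]
  {τ : ℕ} {s : X × JHist U1 Z1 U2 Z2 τ → ℝ} {o2 : Hist2 U2 Z2 τ} {g : Hist1 U1 Z1 τ}

theorem marg2_eq_sum_of_support (hg : ∀ x o1, o1 ≠ g → s (x, (o1, o2)) = 0) :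
    marg2 τ s o2 = ∑ x, s (x, (g, o2)) :=
  Finset.sum_congr rfl fun x _ =>
    Finset.sum_eq_single_of_mem g (Finset.mem_univ g) fun o1 _ hne => hg x o1 hne

theorem existsUnique_sum_pos_of_support (hg : ∀ x o1, o1 ≠ g → s (x, (o1, o2)) = 0)
    (h : 0 < marg2 τ s o2) : ∃! o1, 0 < ∑ x, s (x, (o1, o2)) := by
  have hgpos : 0 < ∑ x, s (x, (g, o2)) := marg2_eq_sum_of_support hg ▸ h
  refine ⟨g, hgpos, fun o1 (hpos : 0 < ∑ x, s (x, (o1, o2))) => ?_⟩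
  by_contra hne
  rw [Finset.sum_eq_zero fun x _ => hg x o1 hne] at hpos
  exact lt_irrefl _ hpos

theorem isDist_condOcc_of_support (hs : ∀ xo, 0 ≤ s xo)
    (hg : ∀ x o1, o1 ≠ g → s (x, (o1, o2)) = 0) (h : 0 < marg2 τ s o2) :
    IsDist fun x => condOcc τ s o2 (x, g) := by
  refine ⟨fun x => div_nonneg (hs _) h.le, ?_⟩
  simp only [condOcc]
  rw [← Finset.sum_div, ← marg2_eq_sum_of_support hg, div_self h.ne']

theorem condOcc_eq_zero_of_support (hg : ∀ x o1, o1 ≠ g → s (x, (o1, o2)) = 0)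
    (x : X) {o1 : Hist1 U1 Z1 τ} (hne : o1 ≠ g) : condOcc τ s o2 (x, o1) = 0 := by
  rw [condOcc, hg x o1 hne, zero_div]

end SingleHistorySupport

end PublicHistories

section ZSPOSG

variable {X U1 U2 Z1 Z2 : Type}
variable [Fintype X] [Fintype U1] [Fintype U2] [Fintype Z1] [Fintype Z2]
variable [DecidableEq X] [DecidableEq U1] [DecidableEq U2] [DecidableEq Z1] [DecidableEq Z2]

open Classical in
theorem stmt11_general
    (p : X → U1 × U2 → X × (Z1 × Z2) → ℝ)
    (s0 : X → ℝ)
    (hp : ∀ x u, IsDist (p x u)) (hs0 : IsDist s0)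
    (fpao : Z1 ⊕ Z2 → (Z1 × Z2) × (U1 × U2))
    (hpao : ∀ (x : X) (u : U1 × U2) (y : X) (z : Z1 × Z2), 0 < p x u (y, z) →
      fpao (Sum.inl z.1) = (z, u) ∧ fpao (Sum.inr z.2) = (z, u))
    (pol1 : (t : ℕ) → DR1 U1 Z1 t) (pol2 : (t : ℕ) → DR2 U2 Z2 t)
    (τ : ℕ) (o2 : Hist2 U2 Z2 τ)
    (h : 0 < marg2 τ (occInduced p s0 pol1 pol2 τ) o2) :
    (∃! o1 : Hist1 U1 Z1 τ,
        0 < ∑ x : X, occInduced p s0 pol1 pol2 τ (x, (o1, o2))) ∧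
      ∃ (o1 : Hist1 U1 Z1 τ) (b : X → ℝ), IsDist b ∧
        ∀ (x : X) (o1' : Hist1 U1 Z1 τ),
          condOcc τ (occInduced p s0 pol1 pol2 τ) o2 (x, o1') =
            if o1' = o1 then b x else 0 := by
  have hp' : ∀ x u yz, 0 ≤ p x u yz := fun x u => (hp x u).1
  have hsupp : ∀ x o1, o1 ≠ publicHist1 fpao o2 →
      occInduced p s0 pol1 pol2 τ (x, (o1, o2)) = 0 := fun x _ hne =>
    occInduced_eq_zero_of_ne_publicHist1 p s0 pol1 pol2 hp' hpao x hne
  refine ⟨existsUnique_sum_pos_of_support hsupp h, publicHist1 fpao o2, _,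
    isDist_condOcc_of_support (occInduced_nonneg p s0 pol1 pol2 hp' hs0.1) hsupp h,
    fun x o1' => ?_⟩
  split_ifs with hne
  · rw [hne]
  · exact condOcc_eq_zero_of_support hsupp x hne

open Classical in
/-- in a zs-POSG with public actions and observations (a function
`f_pao : Z¹ ⊕ Z² → Z × U` with `f_pao(z¹) = f_pao(z²) = (z, u)` whenever
`p(y,z|x,u) > 0`), each player's history determines the joint history on the support of
any reachable occupancy state: for every player-2 history `o²` with positive marginal
there is exactly one player-1 history `o¹` with `Σ_x s_τ(x,(o¹,o²)) > 0`; consequently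
the conditional occupancy state `s^{c,o²}_τ` is supported on a single player-1 history
and is determined by a belief state, i.e. a probability distribution over hidden
states. -/
theorem stmt11
    [Nonempty X] [Nonempty U1] [Nonempty U2] [Nonempty Z1] [Nonempty Z2]
    (p : X → U1 × U2 → X × (Z1 × Z2) → ℝ) (r : X → U1 × U2 → ℝ)
    (s0 : X → ℝ) (γ : ℝ) (ℓ : ℕ)
    (hp : ∀ x u, IsDist (p x u)) (hs0 : IsDist s0) (hγ0 : 0 ≤ γ) (hγ1 : γ < 1)
    (fpao : Z1 ⊕ Z2 → (Z1 × Z2) × (U1 × U2))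
    (hpao : ∀ (x : X) (u : U1 × U2) (y : X) (z : Z1 × Z2), 0 < p x u (y, z) →
      fpao (Sum.inl z.1) = (z, u) ∧ fpao (Sum.inr z.2) = (z, u))
    (pol1 : (t : ℕ) → DR1 U1 Z1 t) (pol2 : (t : ℕ) → DR2 U2 Z2 t)
    (τ : ℕ) (o2 : Hist2 U2 Z2 τ)
    (h : 0 < marg2 τ (occInduced p s0 pol1 pol2 τ) o2) :
    (∃! o1 : Hist1 U1 Z1 τ,
        0 < ∑ x : X, occInduced p s0 pol1 pol2 τ (x, (o1, o2))) ∧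
      ∃ (o1 : Hist1 U1 Z1 τ) (b : X → ℝ), IsDist b ∧
        ∀ (x : X) (o1' : Hist1 U1 Z1 τ),
          condOcc τ (occInduced p s0 pol1 pol2 τ) o2 (x, o1') =
            if o1' = o1 then b x else 0 :=
  stmt11_general p s0 hp hs0 fpao hpao pol1 pol2 τ o2 h

end ZSPOSG
end
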